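/- Let A be a D × M complex matrix with A Aᴴ = I_D, and let q > 1. Then (1/(1-q)) · log((1/D^q) Σ_{i,j} |A_{ij}|^{2q}) ≥ log D. In other words, the Rényi-q decomposition entropy of the state with coefficients A_{ij}/√D is at least log D. -/

import Mathlib

/-!
Each row of a coisometry is a unit vector, so its squared moduli `p_j = ‖A i j‖²` form a
probability vector. For `q > 1` and `0 ≤ p ≤ 1` we have `p ^ q ≤ p`, hence every row contributes
at most `1` to `∑ ‖A i j‖ ^ (2q)`, and the whole sum `S` satisfies `0 < S ≤ D`. Then
`log (S / D ^ q) ≤ (1 - q) log D`, and dividing by `1 - q < 0` reverses the inequality.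
-/

open Matrix

theorem Real.sum_rpow_le_one_of_sum_eq_one {ι : Type*} {s : Finset ι} {w : ι → ℝ}
    (hw : ∀ i ∈ s, 0 ≤ w i) (hsum : ∑ i ∈ s, w i = 1) {q : ℝ} (hq : 1 ≤ q) :
    ∑ i ∈ s, w i ^ q ≤ 1 := by
  calc ∑ i ∈ s, w i ^ q ≤ ∑ i ∈ s, w i := Finset.sum_le_sum fun i hi => by
        have hwi : w i ≤ 1 := hsum ▸ Finset.single_le_sum hw hi
        simpa using Real.rpow_le_rpow_of_exponent_ge' (hw i hi) hwi zero_le_one hq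
    _ = 1 := hsum

theorem Real.sum_rpow_pos_of_sum_eq_one {ι : Type*} {s : Finset ι} {w : ι → ℝ}
    (hw : ∀ i ∈ s, 0 ≤ w i) (hsum : ∑ i ∈ s, w i = 1) (q : ℝ) :
    0 < ∑ i ∈ s, w i ^ q := by
  obtain ⟨i, hi, hwi⟩ := Finset.exists_ne_zero_of_sum_ne_zero (hsum ▸ one_ne_zero)
  exact Finset.sum_pos' (fun j hj => Real.rpow_nonneg (hw j hj) q)
    ⟨i, hi, Real.rpow_pos_of_pos ((hw i hi).lt_of_ne' hwi) q⟩

namespace Matrix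

variable {m n 𝕜 : Type*} [Fintype n] [DecidableEq m] [RCLike 𝕜] {A : Matrix m n 𝕜}

theorem sum_sq_norm_row_eq_one_of_mul_conjTranspose_eq_one (hA : A * Aᴴ = 1) (i : m) :
    ∑ j, ‖A i j‖ ^ 2 = 1 := by
  have h := congrFun (congrFun hA i) i
  simp only [mul_apply, conjTranspose_apply, RCLike.star_def, RCLike.mul_conj, one_apply_eq] at h
  exact_mod_cast h

variable [Fintype m]

theorem sum_norm_rpow_two_mul_le_card_of_mul_conjTranspose_eq_one (hA : A * Aᴴ = 1) {q : ℝ}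
    (hq : 1 ≤ q) : ∑ i, ∑ j, ‖A i j‖ ^ (2 * q) ≤ Fintype.card m := by
  calc ∑ i, ∑ j, ‖A i j‖ ^ (2 * q) ≤ ∑ _i : m, (1 : ℝ) := Finset.sum_le_sum fun i _ => by
        simpa only [Real.rpow_mul (norm_nonneg _), Real.rpow_two] using
          Real.sum_rpow_le_one_of_sum_eq_one (fun j _ => sq_nonneg ‖A i j‖)
            (sum_sq_norm_row_eq_one_of_mul_conjTranspose_eq_one hA i) hq
    _ = Fintype.card m := by simp

theorem sum_norm_rpow_two_mul_pos_of_mul_conjTranspose_eq_one [Nonempty m] (hA : A * Aᴴ = 1)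
    (q : ℝ) : 0 < ∑ i, ∑ j, ‖A i j‖ ^ (2 * q) := by
  refine Finset.sum_pos (fun i _ => ?_) Finset.univ_nonempty
  simpa only [Real.rpow_mul (norm_nonneg _), Real.rpow_two] using
    Real.sum_rpow_pos_of_sum_eq_one (fun j _ => sq_nonneg ‖A i j‖)
      (sum_sq_norm_row_eq_one_of_mul_conjTranspose_eq_one hA i) q

end Matrix

/-- For a `D × M` complex matrix with `A * Aᴴ = 1` (`D ≥ 1`) and `q > 1`, the Rényi-`q`
decomposition entropy of the state with coefficients `A i j / √D` is at least `log D`: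
`(1/(1-q)) · log ((1/D^q) ∑_{i,j} ‖A i j‖^(2q)) ≥ log D`. -/
theorem renyi_entropy_coisometry_ge_log {D M : ℕ} (hD : 1 ≤ D)
    (A : Matrix (Fin D) (Fin M) ℂ) (hA : A * Aᴴ = 1) (q : ℝ) (hq : 1 < q) :
    (1 / (1 - q)) * Real.log ((1 / (D : ℝ) ^ q) * ∑ i, ∑ j, ‖A i j‖ ^ (2 * q)) ≥
      Real.log D := by
  have hD_pos : (0 : ℝ) < D := by exact_mod_cast hD
  have : Nonempty (Fin D) := ⟨⟨0, hD⟩⟩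
  set S := ∑ i, ∑ j, ‖A i j‖ ^ (2 * q)
  have hS_pos : 0 < S := sum_norm_rpow_two_mul_pos_of_mul_conjTranspose_eq_one hA q
  have hS_le : S ≤ D := by
    simpa using sum_norm_rpow_two_mul_le_card_of_mul_conjTranspose_eq_one hA hq.le
  have hlog : Real.log (1 / (D : ℝ) ^ q * S) ≤ (1 - q) * Real.log D :=
    calc Real.log (1 / (D : ℝ) ^ q * S) ≤ Real.log (1 / (D : ℝ) ^ q * D) := by gcongr
      _ = Real.log ((D : ℝ) ^ (1 - q)) := by
        rw [Real.rpow_sub hD_pos, Real.rpow_one, one_div_mul_eq_div]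
      _ = (1 - q) * Real.log D := Real.log_rpow hD_pos _
  rw [ge_iff_le, one_div_mul_eq_div, le_div_iff_of_neg (by linarith)]
  linarith
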